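/- (Proposition 3) Under the Gaussian regression model with global regression coefficients and cluster-specific Gaussian spatial random effects, for any two indices i ≠ j the marginal correlation of the responses is Corr(y_i, y_j) = (x_iᵀ T x_j + Σ_{h=1}^{k} λ_h² (H_h)_{ij} P(c_i = c_j = h)) / (√(σ² + x_iᵀ T x_i + Σ_{h=1}^{k} λ_h² P(c_i = h)) · √(σ² + x_jᵀ T x_j + Σ_{h=1}^{k} λ_h² P(c_j = h))). -/

import Mathlib

/-
Write `y i = b i + θ i + ε i` with `b i = xᵢᵀ β`. The three components are independent of each
other across all indices, so `Cov(y i, y j)` is the sum of the covariances of the components.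
`Cov(b i, b j) = xᵢᵀ T xⱼ` by polarization, since every linear form of `β` is Gaussian with variance
given by `T`; `Cov(θ i, θ j)` is the expectation of the conditional covariance given the labels
(tower property), since the conditional means vanish; and `Cov(ε i, ε j) = σ² 1{i = j}`. Taking
`i = j` and using `(H h) i i = 1` gives the variances.
-/

open MeasureTheory ProbabilityTheory

/-- Covariance of two real random variables. -/
noncomputable def cov {Ω : Type*} [MeasurableSpace Ω] (P : Measure Ω) (f g : Ω → ℝ) : ℝ :=
  (∫ ω, f ω * g ω ∂P) - (∫ ω, f ω ∂P) * (∫ ω, g ω ∂P)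

/-- Variance of a real random variable. -/
noncomputable def var {Ω : Type*} [MeasurableSpace Ω] (P : Measure Ω) (f : Ω → ℝ) : ℝ :=
  cov P f f

/-- Correlation of two real random variables. -/
noncomputable def corr {Ω : Type*} [MeasurableSpace Ω] (P : Measure Ω) (f g : Ω → ℝ) : ℝ :=
  cov P f g / (Real.sqrt (var P f) * Real.sqrt (var P g))

open scoped Matrix NNReal ENNReal

section Moments

variable {Ω : Type*} [MeasurableSpace Ω] {P : Measure Ω}

lemma cov_eq_covariance [IsProbabilityMeasure P] {f g : Ω → ℝ} (hf : MemLp f 2 P)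
    (hg : MemLp g 2 P) : cov P f g = cov[f, g; P] := by
  rw [covariance_eq_sub hf hg]
  rfl

/-- `P.map X = 0` unless `X` is a.e.-measurable, so a nonzero law forces measurability. -/
lemma ProbabilityTheory.HasLaw.of_map_eq {𝓧 : Type*} [MeasurableSpace 𝓧] {X : Ω → 𝓧}
    {ν : Measure 𝓧} [NeZero ν] (h : P.map X = ν) : HasLaw X ν P :=
  ⟨.of_map_ne_zero (h ▸ NeZero.ne ν), h⟩

variable {X : Ω → ℝ} {m : ℝ} {v : ℝ≥0}

lemma ProbabilityTheory.HasLaw.memLp_of_gaussianReal (hX : HasLaw X (gaussianReal m v) P)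
    {p : ℝ≥0∞} (hp : p ≠ ∞) : MemLp X p P :=
  (memLp_map_measure_iff aestronglyMeasurable_id hX.aemeasurable).mp
    (hX.map_eq ▸ memLp_id_gaussianReal' p hp)

lemma ProbabilityTheory.HasLaw.variance_of_gaussianReal (hX : HasLaw X (gaussianReal m v) P) :
    Var[X; P] = v := by
  rw [hX.variance_eq, variance_id_gaussianReal]

end Moments

lemma sum_sum_mul_mul_eq_dotProduct_mulVec {ι : Type*} [Fintype ι] (a b : ι → ℝ)
    (T : Matrix ι ι ℝ) : ∑ l, ∑ m, a l * T l m * b m = a ⬝ᵥ T *ᵥ b := by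
  simp only [dotProduct, Matrix.mulVec, Finset.mul_sum, mul_assoc]

lemma Matrix.PosSemidef.dotProduct_mulVec_comm {ι : Type*} [Fintype ι] {T : Matrix ι ι ℝ}
    (hT : T.PosSemidef) (a b : ι → ℝ) : a ⬝ᵥ T *ᵥ b = b ⬝ᵥ T *ᵥ a := by
  rw [Matrix.dotProduct_mulVec, ← Matrix.mulVec_transpose,
    ← Matrix.conjTranspose_eq_transpose_of_trivial, hT.1, dotProduct_comm]

section GaussianVector

variable {Ω ι : Type*} [MeasurableSpace Ω] {P : Measure Ω} [IsProbabilityMeasure P] [Fintype ι]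
  {β : Ω → ι → ℝ} {μ : ι → ℝ} {T : Matrix ι ι ℝ}

lemma covariance_linearCombination_of_gaussian (hT : T.PosSemidef)
    (hβ : ∀ a : ι → ℝ, P.map (fun ω => ∑ l, a l * β ω l)
      = gaussianReal (∑ l, a l * μ l) (∑ l, ∑ m, a l * T l m * a m).toNNReal)
    (a b : ι → ℝ) :
    cov[fun ω => ∑ l, a l * β ω l, fun ω => ∑ l, b l * β ω l; P]
      = ∑ l, ∑ m, a l * T l m * b m := by
  have hlaw a := HasLaw.of_map_eq (hβ a)
  have hvar a : Var[fun ω => ∑ l, a l * β ω l; P] = a ⬝ᵥ T *ᵥ a := by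
    rw [(hlaw a).variance_of_gaussianReal, sum_sum_mul_mul_eq_dotProduct_mulVec,
      Real.coe_toNNReal _ (by simpa using hT.dotProduct_mulVec_nonneg a)]
  have hadd : (fun ω => ∑ l, (a + b) l * β ω l)
      = (fun ω => ∑ l, a l * β ω l) + fun ω => ∑ l, b l * β ω l := by
    ext ω
    simp only [Pi.add_apply, add_mul, Finset.sum_add_distrib]
  have hpolar := variance_add ((hlaw a).memLp_of_gaussianReal (p := 2) (by simp))
    ((hlaw b).memLp_of_gaussianReal (p := 2) (by simp))
  rw [← hadd, hvar, hvar, hvar, Matrix.mulVec_add, dotProduct_add, add_dotProduct,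
    add_dotProduct, hT.dotProduct_mulVec_comm b a] at hpolar
  rw [sum_sum_mul_mul_eq_dotProduct_mulVec]
  linarith

end GaussianVector

section Conditioning

variable {Ω : Type*} {m m₀ : MeasurableSpace Ω} {P : Measure Ω} [IsProbabilityMeasure P]

lemma integral_eq_of_condExp_ae_eq (hm : m ≤ m₀) {f g : Ω → ℝ} (h : P[f|m] =ᵐ[P] g) :
    ∫ ω, f ω ∂P = ∫ ω, g ω ∂P := by
  rw [← integral_condExp hm, integral_congr_ae h]

lemma covariance_eq_integral_of_condExp (hm : m ≤ m₀) {f g h : Ω → ℝ} (hf : MemLp f 2 P)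
    (hg : MemLp g 2 P) (hf₀ : P[f|m] =ᵐ[P] 0) (hfg : P[fun ω => f ω * g ω|m] =ᵐ[P] h) :
    cov[f, g; P] = ∫ ω, h ω ∂P := by
  rw [covariance_eq_sub hf hg, integral_eq_of_condExp_ae_eq hm hf₀]
  simpa using integral_eq_of_condExp_ae_eq hm hfg

end Conditioning

lemma integral_sum_mul_ite {Ω ι : Type*} [MeasurableSpace Ω] {P : Measure Ω}
    [IsFiniteMeasure P] [Fintype ι] (C : ι → ℝ) {A : ι → Ω → Prop} [∀ h, DecidablePred (A h)]
    (hA : ∀ h, MeasurableSet {ω | A h ω}) :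
    ∫ ω, ∑ h, C h * (if A h ω then 1 else 0) ∂P = ∑ h, C h * (P {ω | A h ω}).toReal := by
  have hind h : (fun ω => if A h ω then (1 : ℝ) else 0) = {ω | A h ω}.indicator 1 := by
    ext ω
    simp [Set.indicator_apply]
  rw [integral_finsetSum _ fun h _ =>
    (hind h ▸ (integrable_const 1).indicator (hA h)).const_mul _]
  refine Finset.sum_congr rfl fun h _ => ?_
  rw [integral_const_mul, hind h, integral_indicator_one (hA h), measureReal_def]

section Independence

variable {Ω ι : Type*} [MeasurableSpace Ω] {P : Measure Ω}

lemma covariance_eq_ite_of_iIndepFun [DecidableEq ι] {ε : ι → Ω → ℝ} (hε : iIndepFun ε P)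
    (hL2 : ∀ i, MemLp (ε i) 2 P) {v : ℝ} (hv : ∀ i, Var[ε i; P] = v) (i j : ι) :
    cov[ε i, ε j; P] = if i = j then v else 0 := by
  split_ifs with hij
  · rw [hij, covariance_self (hL2 j).aemeasurable, hv]
  · exact (hε.indepFun hij).covariance_eq_zero (hL2 i) (hL2 j)

lemma covariance_add_add_of_indepFun [IsFiniteMeasure P] {X₁ X₂ X₃ : ι → Ω → ℝ}
    (h₁ : ∀ i, MemLp (X₁ i) 2 P) (h₂ : ∀ i, MemLp (X₂ i) 2 P) (h₃ : ∀ i, MemLp (X₃ i) 2 P)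
    (h₁₂ : ∀ i j, IndepFun (X₁ i) (X₂ j) P) (h₁₃ : ∀ i j, IndepFun (X₁ i) (X₃ j) P)
    (h₂₃ : ∀ i j, IndepFun (X₂ i) (X₃ j) P) (i j : ι) :
    cov[X₁ i + X₂ i + X₃ i, X₁ j + X₂ j + X₃ j; P]
      = cov[X₁ i, X₁ j; P] + cov[X₂ i, X₂ j; P] + cov[X₃ i, X₃ j; P] := by
  have c₁₂ := (h₁₂ i j).covariance_eq_zero (h₁ i) (h₂ j)
  have c₂₁ := (h₁₂ j i).symm.covariance_eq_zero (h₂ i) (h₁ j)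
  have c₁₃ := (h₁₃ i j).covariance_eq_zero (h₁ i) (h₃ j)
  have c₃₁ := (h₁₃ j i).symm.covariance_eq_zero (h₃ i) (h₁ j)
  have c₂₃ := (h₂₃ i j).covariance_eq_zero (h₂ i) (h₃ j)
  have c₃₂ := (h₂₃ j i).symm.covariance_eq_zero (h₃ i) (h₂ j)
  have h₁₂₃ := ((h₁ j).add (h₂ j)).add (h₃ j)
  rw [covariance_add_left ((h₁ i).add (h₂ i)) (h₃ i) h₁₂₃, covariance_add_left (h₁ i) (h₂ i) h₁₂₃]
  rw [covariance_add_right (h₁ i) ((h₁ j).add (h₂ j)) (h₃ j),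
    covariance_add_right (h₂ i) ((h₁ j).add (h₂ j)) (h₃ j),
    covariance_add_right (h₃ i) ((h₁ j).add (h₂ j)) (h₃ j),
    covariance_add_right (h₁ i) (h₁ j) (h₂ j), covariance_add_right (h₂ i) (h₁ j) (h₂ j),
    covariance_add_right (h₃ i) (h₁ j) (h₂ j)]
  linear_combination c₁₂ + c₂₁ + c₁₃ + c₃₁ + c₂₃ + c₃₂

end Independence

theorem correlation_global_regression_local_spatial_general
    {Ω : Type*} [MeasurableSpace Ω] (P : Measure Ω) [IsProbabilityMeasure P]
    (n k p : ℕ)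
    -- random cluster labels
    (c : Fin n → Ω → Fin k) (hc : ∀ i, Measurable (c i))
    -- global Gaussian coefficient vector β ~ N(μv, T)
    (β : Ω → (Fin p → ℝ))
    -- Gaussian errors
    (ε : Fin n → Ω → ℝ)
    -- cluster-specific spatial random effects
    (θ : Fin n → Ω → ℝ)
    (μv : Fin p → ℝ) (T : Matrix (Fin p) (Fin p) ℝ) (hT : T.PosSemidef)
    (σ : ℝ)
    (lam : Fin k → ℝ)
    (H : Fin k → Matrix (Fin n) (Fin n) ℝ)
    (hHdiag : ∀ h i, H h i i = 1)
    -- β is Gaussian with mean μv and covariance T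
    (hβgauss : ∀ a : Fin p → ℝ,
      Measure.map (fun ω => ∑ l, a l * β ω l) P
        = gaussianReal (∑ l, a l * μv l)
            (Real.toNNReal (∑ l, ∑ m, a l * T l m * a m)))
    -- the ε's are i.i.d. N(0, σ²)
    (hεindep : iIndepFun ε P)
    (hεgauss : ∀ i, Measure.map (ε i) P = gaussianReal 0 (Real.toNNReal (σ ^ 2)))
    -- the θ's are square integrable with the prescribed conditional moments given the labels
    (hθL2 : ∀ i, MemLp (θ i) 2 P)
    (hθcond1 : ∀ i, P[θ i |
      MeasurableSpace.comap (fun ω (i' : Fin n) => c i' ω) inferInstance] =ᵐ[P] 0)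
    (hθcond2 : ∀ i j, P[fun ω => θ i ω * θ j ω |
      MeasurableSpace.comap (fun ω (i' : Fin n) => c i' ω) inferInstance]
      =ᵐ[P] fun ω => ∑ h, (lam h) ^ 2 * H h i j * (if c i ω = h ∧ c j ω = h then (1 : ℝ) else 0))
    -- β is independent of (labels, θ)
    (hβind : IndepFun β (fun ω => ((fun i => c i ω, fun i => θ i ω) :
      (Fin n → Fin k) × (Fin n → ℝ))) P)
    -- the ε family is independent of (labels, θ, β)
    (hεind : IndepFun (fun ω (i : Fin n) => ε i ω)
      (fun ω => ((fun i => c i ω, fun i => θ i ω, β ω) :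
        (Fin n → Fin k) × (Fin n → ℝ) × (Fin p → ℝ))) P)
    -- fixed covariates and responses
    (x : Fin n → Fin p → ℝ)
    (y : Fin n → Ω → ℝ)
    (hy : ∀ i ω, y i ω = (∑ l, x i l * β ω l) + θ i ω + ε i ω)
    (i j : Fin n) (hij : i ≠ j) :
    corr P (y i) (y j)
      = ((∑ l, ∑ m, x i l * T l m * x j m)
          + ∑ h, (lam h) ^ 2 * H h i j * (P {ω | c i ω = h ∧ c j ω = h}).toReal)
        / (Real.sqrt (σ ^ 2 + (∑ l, ∑ m, x i l * T l m * x i m)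
              + ∑ h, (lam h) ^ 2 * (P {ω | c i ω = h}).toReal)
            * Real.sqrt (σ ^ 2 + (∑ l, ∑ m, x j l * T l m * x j m)
              + ∑ h, (lam h) ^ 2 * (P {ω | c j ω = h}).toReal)) := by
  set b : Fin n → Ω → ℝ := fun i ω => ∑ l, x i l * β ω l
  have hbL2 i : MemLp (b i) 2 P :=
    (HasLaw.of_map_eq (hβgauss (x i))).memLp_of_gaussianReal (by simp)
  have hεlaw i := HasLaw.of_map_eq (hεgauss i)
  have hεL2 i : MemLp (ε i) 2 P := (hεlaw i).memLp_of_gaussianReal (by simp)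
  have hεvar i : Var[ε i; P] = σ ^ 2 := by
    rw [(hεlaw i).variance_of_gaussianReal, Real.coe_toNNReal _ (sq_nonneg σ)]
  have hbθ i j : IndepFun (b i) (θ j) P :=
    hβind.comp (φ := fun v : Fin p → ℝ => ∑ l, x i l * v l)
      (ψ := fun w : (Fin n → Fin k) × (Fin n → ℝ) => w.2 j) (by fun_prop) (by fun_prop)
  have hbε i j : IndepFun (b i) (ε j) P := .symm <| hεind.comp (φ := fun v : Fin n → ℝ => v j)
    (ψ := fun w : (Fin n → Fin k) × (Fin n → ℝ) × (Fin p → ℝ) => ∑ l, x i l * w.2.2 l)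
    (by fun_prop) (by fun_prop)
  have hθε i j : IndepFun (θ i) (ε j) P := .symm <| hεind.comp (φ := fun v : Fin n → ℝ => v j)
    (ψ := fun w : (Fin n → Fin k) × (Fin n → ℝ) × (Fin p → ℝ) => w.2.1 i)
    (by fun_prop) (by fun_prop)
  have hlabels : MeasurableSpace.comap (fun ω i => c i ω) inferInstance ≤ ‹MeasurableSpace Ω› :=
    (measurable_pi_lambda _ hc).comap_le
  have hcov i j : cov P (y i) (y j) = (∑ l, ∑ m, x i l * T l m * x j m)
      + ∑ h, (lam h) ^ 2 * H h i j * (P {ω | c i ω = h ∧ c j ω = h}).toReal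
      + if i = j then σ ^ 2 else 0 := by
    have hdecomp i : y i = b i + θ i + ε i := funext (hy i)
    rw [hdecomp, hdecomp, cov_eq_covariance (((hbL2 i).add (hθL2 i)).add (hεL2 i))
        (((hbL2 j).add (hθL2 j)).add (hεL2 j)),
      covariance_add_add_of_indepFun hbL2 hθL2 hεL2 hbθ hbε hθε,
      covariance_linearCombination_of_gaussian hT hβgauss,
      covariance_eq_integral_of_condExp hlabels (hθL2 i) (hθL2 j) (hθcond1 i) (hθcond2 i j),
      integral_sum_mul_ite, covariance_eq_ite_of_iIndepFun hεindep hεL2 hεvar]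
    exact fun h => (hc i (measurableSet_singleton h)).inter (hc j (measurableSet_singleton h))
  have hvar i : var P (y i) = σ ^ 2 + (∑ l, ∑ m, x i l * T l m * x i m)
      + ∑ h, (lam h) ^ 2 * (P {ω | c i ω = h}).toReal := by
    simp only [var, hcov, hHdiag, and_self, mul_one, if_pos]
    ring
  rw [corr, hcov, hvar, hvar, if_neg hij, add_zero]

/-- (Proposition 3) Under the Gaussian regression model with global regression coefficients
and cluster-specific Gaussian spatial random effects, for any two indices `i ≠ j`,
`Corr(y i, y j) = (xᵢᵀ T xⱼ + ∑ₕ λₕ² (Hₕ)ᵢⱼ P(cᵢ = cⱼ = h))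
  / (√(σ² + xᵢᵀ T xᵢ + ∑ₕ λₕ² P(cᵢ = h)) · √(σ² + xⱼᵀ T xⱼ + ∑ₕ λₕ² P(cⱼ = h)))`. -/
theorem correlation_global_regression_local_spatial
    {Ω : Type*} [MeasurableSpace Ω] (P : Measure Ω) [IsProbabilityMeasure P]
    (n k p : ℕ) (hn : 2 ≤ n) (hk : 1 ≤ k) (hp : 1 ≤ p)
    -- random cluster labels
    (c : Fin n → Ω → Fin k) (hc : ∀ i, Measurable (c i))
    -- global Gaussian coefficient vector β ~ N(μv, T)
    (β : Ω → (Fin p → ℝ)) (hβ : Measurable β)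
    -- Gaussian errors
    (ε : Fin n → Ω → ℝ) (hε : ∀ i, Measurable (ε i))
    -- cluster-specific spatial random effects
    (θ : Fin n → Ω → ℝ) (hθ : ∀ i, Measurable (θ i))
    (μv : Fin p → ℝ) (T : Matrix (Fin p) (Fin p) ℝ) (hT : T.PosSemidef)
    (σ : ℝ) (hσ : 0 < σ)
    (lam : Fin k → ℝ) (hlam : ∀ h, 0 < lam h)
    (H : Fin k → Matrix (Fin n) (Fin n) ℝ) (hH : ∀ h, (H h).PosSemidef)
    (hHdiag : ∀ h i, H h i i = 1)
    -- β is Gaussian with mean μv and covariance T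
    (hβgauss : ∀ a : Fin p → ℝ,
      Measure.map (fun ω => ∑ l, a l * β ω l) P
        = gaussianReal (∑ l, a l * μv l)
            (Real.toNNReal (∑ l, ∑ m, a l * T l m * a m)))
    -- the ε's are i.i.d. N(0, σ²)
    (hεindep : iIndepFun ε P)
    (hεgauss : ∀ i, Measure.map (ε i) P = gaussianReal 0 (Real.toNNReal (σ ^ 2)))
    -- the θ's are square integrable with the prescribed conditional moments given the labels
    (hθL2 : ∀ i, MemLp (θ i) 2 P)
    (hθcond1 : ∀ i, P[θ i |
      MeasurableSpace.comap (fun ω (i' : Fin n) => c i' ω) inferInstance] =ᵐ[P] 0)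
    (hθcond2 : ∀ i j, P[fun ω => θ i ω * θ j ω |
      MeasurableSpace.comap (fun ω (i' : Fin n) => c i' ω) inferInstance]
      =ᵐ[P] fun ω => ∑ h, (lam h) ^ 2 * H h i j * (if c i ω = h ∧ c j ω = h then (1 : ℝ) else 0))
    -- β is independent of (labels, θ)
    (hβind : IndepFun β (fun ω => ((fun i => c i ω, fun i => θ i ω) :
      (Fin n → Fin k) × (Fin n → ℝ))) P)
    -- the ε family is independent of (labels, θ, β)
    (hεind : IndepFun (fun ω (i : Fin n) => ε i ω)
      (fun ω => ((fun i => c i ω, fun i => θ i ω, β ω) :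
        (Fin n → Fin k) × (Fin n → ℝ) × (Fin p → ℝ))) P)
    -- fixed covariates and responses
    (x : Fin n → Fin p → ℝ)
    (y : Fin n → Ω → ℝ)
    (hy : ∀ i ω, y i ω = (∑ l, x i l * β ω l) + θ i ω + ε i ω)
    (i j : Fin n) (hij : i ≠ j) :
    corr P (y i) (y j)
      = ((∑ l, ∑ m, x i l * T l m * x j m)
          + ∑ h, (lam h) ^ 2 * H h i j * (P {ω | c i ω = h ∧ c j ω = h}).toReal)
        / (Real.sqrt (σ ^ 2 + (∑ l, ∑ m, x i l * T l m * x i m)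
              + ∑ h, (lam h) ^ 2 * (P {ω | c i ω = h}).toReal)
            * Real.sqrt (σ ^ 2 + (∑ l, ∑ m, x j l * T l m * x j m)
              + ∑ h, (lam h) ^ 2 * (P {ω | c j ω = h}).toReal)) :=
  correlation_global_regression_local_spatial_general P n k p c hc β ε θ μv T hT σ lam H hHdiag
    hβgauss hεindep hεgauss hθL2 hθcond1 hθcond2 hβind hεind x y hy i j hij
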